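/- Let A be a noetherian ring complete with respect to an ideal I, S a profinite set, and J ⊆ A an ideal. Then C(S,J) := {f ∈ C(S,A) : f(s) ∈ J for all s} is a closed ideal of C(S,A) with respect to the I-adic topology on C(S,A), and C(S,A)/C(S,J) ≅ C(S, A/J). -/

import Mathlib

/-! The quotient map `A → A ⧸ J` has a section `σ` that is `I`-adically non-expanding:
`y - y' ∈ Qⁿ` implies `σ y - σ y' ∈ Iⁿ`, where `Q = I·(A ⧸ J)`. To build it, pick
representatives `rₙ(y)` of `y` modulo `Qⁿ` depending only on the class of `y`, lift each
difference `rₙ₊₁(y) - rₙ(y) ∈ Qⁿ` to `Iⁿ` and sum the lifts in the complete ring `A`; the limit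
maps to `y` because `A ⧸ J` is `Q`-adically Hausdorff (Krull: `I` lies in the Jacobson radical
of the complete ring `A`). Composing with `σ` lifts every continuous `S → A ⧸ J`, so
`C(S, A) → C(S, A ⧸ J)` is onto with kernel `C(S, J)`. Closedness of `C(S, J)` is pointwise
closedness of `J`, which is again Krull's theorem in `A ⧸ J`. -/

/-- The ideal `C(S,J)` of continuous functions `S → A` taking all values in the ideal `J`. -/
def contIdeal (S : Type*) [TopologicalSpace S]
    (A : Type*) [CommRing A] [TopologicalSpace A] [IsTopologicalRing A] (J : Ideal A) :
    Ideal C(S, A) where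
  carrier := {f | ∀ s, f s ∈ J}
  add_mem' hf hg s := J.add_mem (hf s) (hg s)
  zero_mem' s := J.zero_mem
  smul_mem' c f hf s := J.mul_mem_left (c s) (hf s)

open Finset

namespace Ideal

variable {A B : Type*} [CommRing A] [CommRing B]

theorem smodEq_pow_smul_top_iff {I : Ideal A} {n : ℕ} {x y : A} :
    x ≡ y [SMOD (I ^ n • ⊤ : Ideal A)] ↔ x - y ∈ I ^ n := by
  rw [SModEq.sub_mem, smul_eq_mul, mul_top]

theorem eq_zero_of_forall_mem_pow {Q : Ideal B} [IsHausdorff Q B] {x : B}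
    (h : ∀ n, x ∈ Q ^ n) : x = 0 :=
  IsHausdorff.haus' (I := Q) x fun n => by rw [SModEq.zero, smul_eq_mul, mul_top]; exact h n

theorem exists_sub_sum_range_mem_pow (I : Ideal A) [IsPrecomplete I A] {t : ℕ → A}
    (ht : ∀ n, t n ∈ I ^ n) : ∃ L, ∀ N, L - ∑ n ∈ range N, t n ∈ I ^ N := by
  have hcauchy {M N : ℕ} (h : M ≤ N) : ∑ n ∈ range M, t n - ∑ n ∈ range N, t n ∈ I ^ M := by
    rw [← neg_mem_iff, neg_sub, sum_range_sub_sum_range h]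
    exact Submodule.sum_mem _ fun n hn => pow_le_pow_right (mem_filter.1 hn).2 (ht n)
  obtain ⟨L, hL⟩ := IsPrecomplete.prec (I := I) (M := A) inferInstance
    (f := fun N => ∑ n ∈ range N, t n) fun h => smodEq_pow_smul_top_iff.2 (hcauchy h)
  exact ⟨L, fun N => by rw [← neg_mem_iff, neg_sub]; exact smodEq_pow_smul_top_iff.1 (hL N)⟩

theorem exists_coset_representatives (K : Ideal B) :
    ∃ r : B → B, (∀ y, r y - y ∈ K) ∧ ∀ y y', y - y' ∈ K → r y = r y' := by
  refine ⟨Function.surjInv Quotient.mk_surjective ∘ Quotient.mk K, fun y => ?_, fun y y' h => ?_⟩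
  · rw [← Quotient.mk_eq_mk_iff_sub_mem]
    exact Function.surjInv_eq _ _
  · rw [Function.comp_apply, Function.comp_apply, (Quotient.mk_eq_mk_iff_sub_mem y y').2 h]

theorem exists_rightInverse_sub_mem_pow (I : Ideal A) [IsPrecomplete I A] {f : A →+* B}
    (hf : Function.Surjective f) [IsHausdorff (I.map f) B] :
    ∃ σ : B → A, Function.RightInverse σ f ∧
      ∀ n y y', y - y' ∈ I.map f ^ n → σ y - σ y' ∈ I ^ n := by
  choose r hr_sub hr_eq using fun n : ℕ => (I.map f ^ n).exists_coset_representatives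
  have hlift (n : ℕ) (z : B) (hz : z ∈ I.map f ^ n) : ∃ a ∈ I ^ n, f a = z := by
    rwa [← Ideal.map_pow, mem_map_iff_of_surjective f hf] at hz
  choose! lift hlift_mem hlift_eq using hlift
  have hdigit (n : ℕ) (y : B) : r (n + 1) y - r n y ∈ I.map f ^ n := by
    have := sub_mem (pow_le_pow_right n.le_succ (hr_sub (n + 1) y)) (hr_sub n y)
    rwa [sub_sub_sub_cancel_right] at this
  set partialSum : ℕ → B → A := fun N y =>
    ∑ n ∈ range N, lift n (r (n + 1) y - r n y)
  choose tail htail using fun y =>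
    exists_sub_sum_range_mem_pow I fun n => hlift_mem n _ (hdigit n y)
  have hf_partialSum (N : ℕ) (y : B) : f (lift 0 (r 0 y) + partialSum N y) = r N y := by
    rw [map_add, map_sum, hlift_eq 0 _ (by simp),
      sum_congr rfl fun n _ => hlift_eq n _ (hdigit n y)]
    exact (eq_sum_range_sub (fun n => r n y) N).symm
  refine ⟨fun y => lift 0 (r 0 y) + tail y, fun y => ?_, fun N y y' h => ?_⟩
  · rw [← sub_eq_zero]
    refine eq_zero_of_forall_mem_pow (Q := I.map f) fun N => ?_
    have hsplit : f (lift 0 (r 0 y) + tail y) - y =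
        f (tail y - partialSum N y) + (r N y - y) := by
      rw [← hf_partialSum N y, map_sub, map_add, map_add]; ring
    rw [hsplit, ← Ideal.map_pow]
    exact add_mem (mem_map_of_mem f (htail y N)) (Ideal.map_pow f I N ▸ hr_sub N y)
  · have hr (n : ℕ) (hn : n ≤ N) : r n y = r n y' := hr_eq n y y' (pow_le_pow_right hn h)
    have hpartialSum : partialSum N y = partialSum N y' := sum_congr rfl fun n hn => by
      rw [hr n (mem_range.1 hn).le, hr (n + 1) (mem_range.1 hn)]
    have hsplit : lift 0 (r 0 y) + tail y - (lift 0 (r 0 y') + tail y') =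
        (tail y - partialSum N y) - (tail y' - partialSum N y') := by
      rw [hr 0 N.zero_le, hpartialSum]; ring
    rw [hsplit]
    exact sub_mem (htail y N) (htail y' N)

theorem isHausdorff_map_quotient [IsNoetherianRing A] (I J : Ideal A)
    (hI : I ≤ jacobson ⊥) : IsHausdorff (I.map (Quotient.mk J)) (A ⧸ J) := by
  rw [← Quotient.algebraMap_eq, IsHausdorff.map_algebraMap_iff]
  exact IsHausdorff.of_le_jacobson I _ hI

theorem mem_of_forall_mem_sup_pow {I J : Ideal A} [IsHausdorff (I.map (Quotient.mk J)) (A ⧸ J)]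
    {x : A} (h : ∀ n, x ∈ J ⊔ I ^ n) : x ∈ J := by
  rw [← Quotient.eq_zero_iff_mem]
  refine eq_zero_of_forall_mem_pow (Q := I.map (Quotient.mk J)) fun n => ?_
  rw [← Ideal.map_pow, ← bot_sup_eq (map _ _), ← map_quotient_self J, ← map_sup]
  exact mem_map_of_mem _ (h n)

end Ideal

theorem IsAdic.continuous_of_forall_sub_mem_pow {A B : Type*} [CommRing A] [CommRing B]
    [TopologicalSpace A] [TopologicalSpace B] {I : Ideal A} {Q : Ideal B} (hI : IsAdic I)
    (hQ : IsAdic Q) {g : A → B} (h : ∀ n x x', x - x' ∈ I ^ n → g x - g x' ∈ Q ^ n) :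
    Continuous g := by
  refine continuous_iff_continuousAt.2 fun x =>
    ((hI.hasBasis_nhds x).tendsto_iff (hQ.hasBasis_nhds (g x))).2 fun n _ => ⟨n, trivial, ?_⟩
  rintro _ ⟨z, hz, rfl⟩
  exact ⟨g (x + z) - g x, h n _ _ (by simpa using hz), add_sub_cancel _ _⟩

section contIdeal

variable {S A : Type*} [TopologicalSpace S] [CommRing A] [TopologicalSpace A]
  [IsTopologicalRing A]

theorem apply_mem_sup_of_mem_contIdeal_sup_map {J K : Ideal A} {g : C(S, A)}
    (hg : g ∈ contIdeal S A J ⊔ K.map (algebraMap A C(S, A))) (s : S) : g s ∈ J ⊔ K := by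
  obtain ⟨a, ha, b, hb, rfl⟩ := Submodule.mem_sup.1 hg
  have hK : K.map (algebraMap A C(S, A)) ≤ K.comap (ContinuousMap.evalAlgHom A A s) :=
    Ideal.map_le_iff_le_comap.2 fun x hx => by simpa using hx
  exact add_mem (Ideal.mem_sup_left (ha s)) (Ideal.mem_sup_right (hK hb))

theorem ker_compLeftContinuous_quotientMk (J : Ideal A) [TopologicalSpace (A ⧸ J)]
    [IsTopologicalRing (A ⧸ J)] (h : Continuous (Ideal.Quotient.mk J)) :
    RingHom.ker ((Ideal.Quotient.mk J).compLeftContinuous S h) = contIdeal S A J := by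
  ext g
  simp only [RingHom.mem_ker, ContinuousMap.ext_iff]
  exact forall_congr' fun s => Ideal.Quotient.eq_zero_iff_mem

end contIdeal

theorem RingHom.compLeftContinuous_surjective {S B C : Type*} [TopologicalSpace S]
    [Semiring B] [TopologicalSpace B] [IsTopologicalSemiring B] [Semiring C]
    [TopologicalSpace C] [IsTopologicalSemiring C] (f : B →+* C) (hf : Continuous f)
    {σ : C → B} (hσ : Continuous σ) (hσf : Function.RightInverse σ f) :
    Function.Surjective (f.compLeftContinuous S hf) := fun g =>
  ⟨(⟨σ, hσ⟩ : C(C, B)).comp g, ContinuousMap.ext fun s => hσf (g s)⟩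

theorem contIdeal_closed_and_quotient_iso
    (A : Type*) [CommRing A] [IsNoetherianRing A] [TopologicalSpace A] [IsTopologicalRing A]
    (I : Ideal A) (hA : IsAdic I) [IsAdicComplete I A]
    (S : Type*) [TopologicalSpace S]
    (J : Ideal A) :
    (∀ g : C(S, A),
        (∀ n : ℕ, g ∈ contIdeal S A J ⊔ Ideal.map (algebraMap A C(S, A)) (I ^ n)) →
        g ∈ contIdeal S A J) ∧
    (letI : TopologicalSpace (A ⧸ J) := (I.map (Ideal.Quotient.mk J)).adicTopology
     haveI : IsTopologicalRing (A ⧸ J) :=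
       (Ideal.nonarchimedean (I.map (Ideal.Quotient.mk J))).toIsTopologicalRing
     Nonempty ((C(S, A) ⧸ contIdeal S A J) ≃+* C(S, A ⧸ J))) := by
  have := Ideal.isHausdorff_map_quotient I J (IsAdicComplete.le_jacobson_bot I)
  refine ⟨fun g hg s => Ideal.mem_of_forall_mem_sup_pow fun n =>
    apply_mem_sup_of_mem_contIdeal_sup_map (hg n) s, ?_⟩
  let _ : TopologicalSpace (A ⧸ J) := (I.map (Ideal.Quotient.mk J)).adicTopology
  have : IsTopologicalRing (A ⧸ J) :=
    (Ideal.nonarchimedean (I.map (Ideal.Quotient.mk J))).toIsTopologicalRing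
  have hQ : IsAdic (I.map (Ideal.Quotient.mk J)) := rfl
  have hmk : Continuous (Ideal.Quotient.mk J) :=
    hA.continuous_of_forall_sub_mem_pow hQ fun n x x' h => by
      rw [← map_sub, ← Ideal.map_pow]
      exact Ideal.mem_map_of_mem _ h
  obtain ⟨σ, hσf, hσ⟩ :=
    Ideal.exists_rightInverse_sub_mem_pow I (Ideal.Quotient.mk_surjective (I := J))
  have hsurj := (Ideal.Quotient.mk J).compLeftContinuous_surjective (S := S) hmk
    (hQ.continuous_of_forall_sub_mem_pow hA hσ) hσf
  exact ⟨(Ideal.quotEquivOfEq (ker_compLeftContinuous_quotientMk J hmk).symm).trans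
    (RingHom.quotientKerEquivOfSurjective hsurj)⟩
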